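/- Let n ≥ 5. If [-,-] is a Lie bracket on μ₀ⁿ making (μ₀ⁿ, ·, [-,-]) a transposed 1-Poisson algebra, and α₁,…,αₙ ∈ ℂ are the coordinates of [e₁,e₂] in the basis e₁,…,eₙ (that is, [e₁,e₂] = Σ_{t=1}^n αₜ eₜ), then [e₁, eᵢ] = Σ_{t=i−1}^n α_{t−i+2} eₜ for all 2 ≤ i ≤ n. -/

import Mathlib

/-!
Put `δ = 1`. The transposed Poisson identity with `z = x = e₁, y = e_m` gives
`e₁·[e₁,e_m] = [e₂,e_m] + [e₁,e_{m+1}]`, and with `z = e_{m-1}, x = e₁, y = e₂` it gives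
`e_{m-1}·[e₁,e₂] = [e_m,e₂] + [e₁,e_{m+1}]`. Adding them cancels the unknown `[e₂,e_m]`,
so `2[e₁,e_{m+1}]` is the sum of two shifts of known vectors, and induction on `m` shows
that both shifts are the claimed sum with its indices moved up by one.
-/

open Finset

/-- The null-filiform associative multiplication on `ℂⁿ = Fin n → ℂ`.
The basis vector `e_i` (1-based) corresponds to the coordinate `i - 1`, and
`e_i · e_j = e_{i+j}` if `i + j ≤ n`, and `0` otherwise. -/
noncomputable def nfMul (n : ℕ) (x y : Fin n → ℂ) : Fin n → ℂ :=
  fun k => ∑ i : Fin n, ∑ j : Fin n,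
    if (i : ℕ) + (j : ℕ) + 1 = (k : ℕ) then x i * y j else 0

/-- The 1-based basis vector `e i` of `ℂⁿ` (zero if `i` is out of range `1,…,n`). -/
noncomputable def nfE (n : ℕ) (i : ℕ) : Fin n → ℂ :=
  fun k => if (k : ℕ) + 1 = i then 1 else 0

/-- The coefficient of the basis vector `e i` (1-based) in `x`. -/
noncomputable def nfCoeff (n : ℕ) (x : Fin n → ℂ) (i : ℕ) : ℂ :=
  ∑ k : Fin n, if (k : ℕ) + 1 = i then x k else 0

/-- A Lie bracket (bilinear, alternating, satisfying the Jacobi identity)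
on a complex vector space. -/
structure LieBracketOn (L : Type*) [AddCommGroup L] [Module ℂ L] where
  br : L → L → L
  add_left : ∀ x y z, br (x + y) z = br x z + br y z
  smul_left : ∀ (c : ℂ) (x y : L), br (c • x) y = c • br x y
  add_right : ∀ x y z, br x (y + z) = br x y + br x z
  smul_right : ∀ (c : ℂ) (x y : L), br x (c • y) = c • br x y
  alt : ∀ x, br x x = 0
  jacobi : ∀ x y z, br (br x y) z + br (br y z) x + br (br z x) y = 0

/-- `(μ₀ⁿ, ·, [-,-])` is a transposed `δ`-Poisson algebra:
`δ • (z · [x,y]) = [z·x, y] + [x, z·y]`. -/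
noncomputable def IsTransposedPoisson (n : ℕ) (δ : ℂ) (B : LieBracketOn (Fin n → ℂ)) : Prop :=
  ∀ x y z, δ • nfMul n z (B.br x y) = B.br (nfMul n z x) y + B.br x (nfMul n z y)

/-- `(μ₀ⁿ, ·, [-,-])` is a `δ`-Poisson algebra:
`[x, y·z] = δ • ([x,y]·z + y·[x,z])`. -/
noncomputable def IsDeltaPoisson (n : ℕ) (δ : ℂ) (B : LieBracketOn (Fin n → ℂ)) : Prop :=
  ∀ x y z, B.br x (nfMul n y z) = δ • (nfMul n (B.br x y) z + nfMul n y (B.br x z))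

/-- The bracket of the transposed 0-Poisson algebra `TP₀(α₁,…,αₙ)` on `μ₀ⁿ`:
determined by `[e₁,e₂] = ∑_{t=1}^n αₜ eₜ` and `[eᵢ,eⱼ] = 0` for all other
pairs `i < j`. -/
noncomputable def brTP0 (n : ℕ) (α : ℕ → ℂ) (x y : Fin n → ℂ) : Fin n → ℂ :=
  (nfCoeff n x 1 * nfCoeff n y 2 - nfCoeff n x 2 * nfCoeff n y 1) •
    ∑ t ∈ Finset.Icc 1 n, α t • nfE n t

/-- The bracket of the transposed 1-Poisson algebra `TP₁(α₂,…,αₙ)` on `μ₀ⁿ`: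
determined by `[e₁,eᵢ] = ∑_{t=i}^n α_{t-i+2} eₜ` for `2 ≤ i ≤ n` and
`[eᵢ,eⱼ] = 0` for `2 ≤ i < j ≤ n`. -/
noncomputable def brTP1 (n : ℕ) (α : ℕ → ℂ) (x y : Fin n → ℂ) : Fin n → ℂ :=
  ∑ i ∈ Finset.Icc 2 n,
    (nfCoeff n x 1 * nfCoeff n y i - nfCoeff n x i * nfCoeff n y 1) •
      ∑ t ∈ Finset.Icc i n, α (t + 2 - i) • nfE n t

/-- The bracket of the transposed `δ`-Poisson algebra `TP_δ(a, b, c)`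
(`a = α_{n-2}`, `b = α_{n-1}`, `c = αₙ`) on `μ₀ⁿ`: determined by
`[e₁,e₂] = a e_{n-2} + b e_{n-1} + c eₙ`, `[e₁,e₃] = δ(a e_{n-1} + b eₙ)`,
`[e₂,e₃] = ((δ²-δ)/2) a eₙ`, `[e₁,e₄] = ((δ²+δ)/2) a eₙ`, and `[eᵢ,eⱼ] = 0`
for all other pairs `i < j`. -/
noncomputable def brTPd (n : ℕ) (δ a b c : ℂ) (x y : Fin n → ℂ) : Fin n → ℂ :=
  (nfCoeff n x 1 * nfCoeff n y 2 - nfCoeff n x 2 * nfCoeff n y 1) •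
      (a • nfE n (n-2) + b • nfE n (n-1) + c • nfE n n)
  + (nfCoeff n x 1 * nfCoeff n y 3 - nfCoeff n x 3 * nfCoeff n y 1) •
      (δ • (a • nfE n (n-1) + b • nfE n n))
  + (nfCoeff n x 2 * nfCoeff n y 3 - nfCoeff n x 3 * nfCoeff n y 2) •
      (((δ^2 - δ)/2 * a) • nfE n n)
  + (nfCoeff n x 1 * nfCoeff n y 4 - nfCoeff n x 4 * nfCoeff n y 1) •
      (((δ^2 + δ)/2 * a) • nfE n n)

/-- Two bracket structures on `μ₀ⁿ` are isomorphic (as transposed δ-Poisson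
algebras): there is a linear bijection preserving both `·` and `[-,-]`. -/
noncomputable def TPIso (n : ℕ) (B B' : (Fin n → ℂ) → (Fin n → ℂ) → (Fin n → ℂ)) : Prop :=
  ∃ φ : (Fin n → ℂ) ≃ₗ[ℂ] (Fin n → ℂ),
    (∀ x y, φ (nfMul n x y) = nfMul n (φ x) (φ y)) ∧
    ∀ x y, φ (B x y) = B' (φ x) (φ y)

lemma nfMul_nfE_apply (n j : ℕ) (hj : 1 ≤ j) (y : Fin n → ℂ) (k : Fin n) :
    nfMul n (nfE n j) y k =
      if h : j ≤ (k : ℕ) then y ⟨(k : ℕ) - j, by omega⟩ else 0 := by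
  simp only [nfMul, nfE, ite_mul, one_mul, zero_mul]
  split_ifs with h
  · rw [Finset.sum_eq_single_of_mem (⟨j - 1, by omega⟩ : Fin n) (mem_univ _)]
    · rw [Finset.sum_eq_single_of_mem (⟨(k : ℕ) - j, by omega⟩ : Fin n) (mem_univ _)]
      · rw [if_pos (by simp; omega), if_pos (by simp; omega)]
      · intro b _ hb
        refine if_neg fun hc => hb (Fin.ext ?_)
        simp at hc ⊢; omega
    · intro a _ ha
      refine Finset.sum_eq_zero fun b _ => ?_
      split_ifs
      · exact absurd (Fin.ext (by simp; omega)) ha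
      all_goals rfl
  · refine Finset.sum_eq_zero fun a _ => Finset.sum_eq_zero fun b _ => ?_
    split_ifs <;> first | rfl | omega

lemma nfMul_nfE_nfE (n i j : ℕ) (hi : 1 ≤ i) (hj : 1 ≤ j) :
    nfMul n (nfE n i) (nfE n j) = nfE n (i + j) := by
  funext k
  rw [nfMul_nfE_apply n i hi]
  simp only [nfE]
  split_ifs <;> first | rfl | omega

lemma nfMul_nfE_sum_shift (n i j : ℕ) (hi : 2 ≤ i) (hj : 1 ≤ j) (α : ℕ → ℂ) :
    nfMul n (nfE n j) (∑ t ∈ Icc (i - 1) n, α (t + 2 - i) • nfE n t) =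
      ∑ t ∈ Icc (i + j - 1) n, α (t + 2 - (i + j)) • nfE n t := by
  funext k
  have hk := k.isLt
  rw [nfMul_nfE_apply n j hj]
  simp only [Finset.sum_apply, Pi.smul_apply, nfE, smul_eq_mul, mul_ite, mul_one, mul_zero,
    Finset.sum_ite_eq, Finset.mem_Icc]
  split_ifs <;> first | rfl | (congr 1; omega)

lemma LieBracketOn.br_swap {n : ℕ} (B : LieBracketOn (Fin n → ℂ)) (x y : Fin n → ℂ) :
    B.br y x = -B.br x y := by
  have h := B.alt (x + y)
  rw [B.add_left, B.add_right, B.add_right, B.alt, B.alt, zero_add, add_zero] at h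
  exact eq_neg_of_add_eq_zero_right h

lemma IsTransposedPoisson.two_smul_br_nfE_one_succ {n : ℕ} {δ : ℂ}
    {B : LieBracketOn (Fin n → ℂ)} (hB : IsTransposedPoisson n δ B) {m : ℕ} (hm : 2 ≤ m) :
    (2 : ℂ) • B.br (nfE n 1) (nfE n (m + 1)) =
      δ • (nfMul n (nfE n 1) (B.br (nfE n 1) (nfE n m)) +
        nfMul n (nfE n (m - 1)) (B.br (nfE n 1) (nfE n 2))) := by
  have h₁ := hB (nfE n 1) (nfE n m) (nfE n 1)
  have h₂ := hB (nfE n 1) (nfE n 2) (nfE n (m - 1))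
  rw [nfMul_nfE_nfE n 1 1 le_rfl le_rfl, nfMul_nfE_nfE n 1 m le_rfl (by omega),
    one_add_one_eq_two, add_comm 1 m] at h₁
  rw [nfMul_nfE_nfE n (m - 1) 1 (by omega) le_rfl,
    nfMul_nfE_nfE n (m - 1) 2 (by omega) one_le_two,
    Nat.sub_add_cancel (by omega : 1 ≤ m), show m - 1 + 2 = m + 1 by omega,
    B.br_swap (nfE n 2) (nfE n m)] at h₂
  rw [smul_add, h₁, h₂, two_smul]
  abel

theorem stmt_3_general (n : ℕ)
    (B : LieBracketOn (Fin n → ℂ)) (hB : IsTransposedPoisson n 1 B)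
    (α : ℕ → ℂ)
    (hα : B.br (nfE n 1) (nfE n 2) = ∑ t ∈ Finset.Icc 1 n, α t • nfE n t) :
    ∀ i, 2 ≤ i → i ≤ n →
      B.br (nfE n 1) (nfE n i) =
        ∑ t ∈ Finset.Icc (i - 1) n, α (t + 2 - i) • nfE n t := by
  have hα' : B.br (nfE n 1) (nfE n 2) = ∑ t ∈ Icc (2 - 1) n, α (t + 2 - 2) • nfE n t := by
    simpa using hα
  intro i hi
  induction i, hi using Nat.le_induction with
  | base => exact fun _ => hα'
  | succ m hm ih =>
    intro hmn
    have h := hB.two_smul_br_nfE_one_succ hm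
    rw [ih (by omega), hα', nfMul_nfE_sum_shift n m 1 hm le_rfl,
      nfMul_nfE_sum_shift n 2 (m - 1) le_rfl (by omega), show 2 + (m - 1) = m + 1 by omega,
      one_smul, ← two_smul ℂ] at h
    exact smul_right_injective (Fin n → ℂ) two_ne_zero h

/-- for `n ≥ 5`, in any transposed `1`-Poisson structure on `μ₀ⁿ`
with `[e₁,e₂] = ∑_{t=1}^n αₜ eₜ`, one has
`[e₁,eᵢ] = ∑_{t=i-1}^n α_{t-i+2} eₜ` for `2 ≤ i ≤ n`. -/
theorem stmt_3 (n : ℕ) (hn : 5 ≤ n)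
    (B : LieBracketOn (Fin n → ℂ)) (hB : IsTransposedPoisson n 1 B)
    (α : ℕ → ℂ)
    (hα : B.br (nfE n 1) (nfE n 2) = ∑ t ∈ Finset.Icc 1 n, α t • nfE n t) :
    ∀ i, 2 ≤ i → i ≤ n →
      B.br (nfE n 1) (nfE n i) =
        ∑ t ∈ Finset.Icc (i - 1) n, α (t + 2 - i) • nfE n t :=
  stmt_3_general n B hB α hα
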